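/- The conditional density p(ξ) ∝ exp(−m·e^{−2ξ} − ξ − ξ²/(2v)) on ℝ, with parameters m > 0 and v > 0, is log-concave and has a unique mode at ξ′ = (1/2)·W(4 e^{2v} m v) − v, where W is the Lambert W function (the inverse of w ↦ w e^w on [0, ∞)). -/

import Mathlib

/-!
The negative log-density `L ξ = m e^{-2ξ} + ξ + ξ²/(2v)` has derivative
`L' ξ = 1 + ξ/v - 2m e^{-2ξ}`, which is strictly increasing because `ξ/v` is and `-2m e^{-2ξ}`
is nondecreasing; hence `L` is strictly convex. Substituting `ξ = W/2 - v` turns `L' ξ = 0`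
into the Lambert equation `W e^W = 4 e^{2v} m v`, so that point is a critical point of a
strictly convex function and therefore its unique minimiser.
-/

open Real Set

theorem StrictConvexOn.lt_of_hasDerivAt_eq_zero {S : Set ℝ} {f : ℝ → ℝ} {x₀ y : ℝ}
    (hf : StrictConvexOn ℝ S f) (hx₀ : x₀ ∈ S) (hy : y ∈ S) (hne : y ≠ x₀)
    (hf' : HasDerivAt f 0 x₀) : f x₀ < f y := by
  rcases hne.lt_or_gt with hlt | hgt
  · have hslope : slope f y x₀ < 0 := hf.slope_lt_of_hasDerivAt hy hx₀ hlt hf'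
    rw [slope_def_field, div_neg_iff] at hslope
    rcases hslope with ⟨-, hden⟩ | ⟨hnum, -⟩ <;> linarith
  · have hslope : 0 < slope f x₀ y := hf.lt_slope_of_hasDerivAt hx₀ hy hgt hf'
    rw [slope_def_field, div_pos_iff] at hslope
    rcases hslope with ⟨hnum, -⟩ | ⟨-, hden⟩ <;> linarith

noncomputable def negLogDensity (m v ξ : ℝ) : ℝ :=
  m * exp (-2 * ξ) + ξ + ξ ^ 2 / (2 * v)

noncomputable def negLogDensityDeriv (m v ξ : ℝ) : ℝ :=
  1 + ξ / v - 2 * m * exp (-2 * ξ)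

theorem hasDerivAt_negLogDensity (m v ξ : ℝ) :
    HasDerivAt (negLogDensity m v) (negLogDensityDeriv m v ξ) ξ := by
  have hexp : HasDerivAt (fun ξ : ℝ => m * exp (-2 * ξ)) (m * (exp (-2 * ξ) * -2)) ξ :=
    (((hasDerivAt_id ξ).const_mul (-2)).exp.congr_deriv (by simp)).const_mul m
  refine ((hexp.add (hasDerivAt_id ξ)).add ((hasDerivAt_pow 2 ξ).div_const (2 * v))).congr_deriv ?_
  rw [negLogDensityDeriv, Nat.cast_ofNat, pow_one, mul_div_mul_left _ _ two_ne_zero]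
  ring

theorem strictMono_negLogDensityDeriv {m v : ℝ} (hm : 0 ≤ m) (hv : 0 < v) :
    StrictMono (negLogDensityDeriv m v) := by
  intro a b hab
  have hlin : a / v < b / v := div_lt_div_of_pos_right hab hv
  have hexp : m * exp (-2 * b) ≤ m * exp (-2 * a) :=
    mul_le_mul_of_nonneg_left (exp_le_exp.mpr (by linarith)) hm
  simp only [negLogDensityDeriv]
  linarith

theorem strictConvexOn_negLogDensity {m v : ℝ} (hm : 0 ≤ m) (hv : 0 < v) :
    StrictConvexOn ℝ univ (negLogDensity m v) := by
  have hderiv : deriv (negLogDensity m v) = negLogDensityDeriv m v :=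
    funext fun ξ => (hasDerivAt_negLogDensity m v ξ).deriv
  refine StrictMono.strictConvexOn_univ_of_deriv ?_ (hderiv ▸ strictMono_negLogDensityDeriv hm hv)
  exact continuous_iff_continuousAt.mpr fun ξ => (hasDerivAt_negLogDensity m v ξ).continuousAt

theorem negLogDensityDeriv_eq_zero_of_mul_exp_eq {m v W : ℝ} (hv : v ≠ 0)
    (hW : W * exp W = 4 * exp (2 * v) * m * v) :
    negLogDensityDeriv m v (1 / 2 * W - v) = 0 := by
  have hexp : exp (-2 * (1 / 2 * W - v)) * exp W = exp (2 * v) := by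
    rw [← exp_add]; ring_nf
  have hlinear : 1 + (1 / 2 * W - v) / v = W / (2 * v) := by field_simp; ring
  rw [negLogDensityDeriv, hlinear, ← mul_left_inj' (exp_ne_zero W), zero_mul, sub_mul,
    mul_assoc (2 * m), hexp, div_mul_eq_mul_div, hW]
  field_simp
  ring

theorem conditional_xi_log_concave_unique_mode
    (m v W : ℝ) (hm : 0 < m) (hv : 0 < v)
    (hW_eq : W * Real.exp W = 4 * Real.exp (2 * v) * m * v) :
    StrictConvexOn ℝ Set.univ
      (fun ξ : ℝ => m * Real.exp (-2 * ξ) + ξ + ξ ^ 2 / (2 * v)) ∧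
    ∀ ξ : ℝ, ξ ≠ (1 / 2) * W - v →
      m * Real.exp (-2 * ((1 / 2) * W - v)) + ((1 / 2) * W - v) +
          ((1 / 2) * W - v) ^ 2 / (2 * v) <
        m * Real.exp (-2 * ξ) + ξ + ξ ^ 2 / (2 * v) := by
  have hconvex := strictConvexOn_negLogDensity hm.le hv
  have hcritical : HasDerivAt (negLogDensity m v) 0 (1 / 2 * W - v) :=
    negLogDensityDeriv_eq_zero_of_mul_exp_eq hv.ne' hW_eq ▸ hasDerivAt_negLogDensity m v _
  exact ⟨hconvex, fun ξ hξ =>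
    hconvex.lt_of_hasDerivAt_eq_zero (mem_univ _) (mem_univ ξ) hξ hcritical⟩
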